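/- Let R be a faithful signed groupoid set. (a) An element ω ∈ ₐG is a maximum of the weak order at a if and only if Φ_ω equals the set of positive real roots at a. (b) If R is antipodal with maximum ωₐ : wₐ → a at each object a, then ω_{wₐ} = ωₐ⁻¹, and for any g : a → b, Φ_{g ωₐ} = (positive real roots at b) \ Φ_g. -/

import Mathlib

open CategoryTheory

universe u v

/-- A signed groupoid set: a groupoid `G` acting on a family of definitely involuted
sets `R a` (`a ∈ Ob G`), with involution `neg`, positive parts `pos a`, and the action
commuting with the involution. -/
structure SGS (G : Type u) [Groupoid G] (R : G → Type v) where
  neg : ∀ {a : G}, R a → R a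
  pos : ∀ a : G, Set (R a)
  act : ∀ {a b : G}, (b ⟶ a) → R b → R a
  neg_neg : ∀ {a : G} (x : R a), neg (neg x) = x
  pos_iff : ∀ {a : G} (x : R a), x ∈ pos a ↔ neg x ∉ pos a
  act_id : ∀ {a : G} (x : R a), act (𝟙 a) x = x
  act_comp : ∀ {a b c : G} (g : c ⟶ b) (f : b ⟶ a) (x : R c),
      act f (act g x) = act (g ≫ f) x
  act_neg : ∀ {a b : G} (f : b ⟶ a) (x : R b), act f (neg x) = neg (act f x)

/-- The morphisms of `G` with codomain `a`. -/
abbrev SHoms (G : Type u) [Groupoid G] (a : G) : Type _ := Σ b : G, (b ⟶ a)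

namespace SGS

variable {G : Type u} [Groupoid G] {R : G → Type v} (S : SGS G R)

/-- The inversion set of a morphism `f : b ⟶ a`: positive roots at `a` sent to
negative roots at `b` by `f⁻¹`. -/
def Phi {a b : G} (f : b ⟶ a) : Set (R a) :=
  {α | α ∈ S.pos a ∧ S.act (Groupoid.inv f) α ∉ S.pos b}

/-- The inversion set of an element of `SHoms G a`. -/
def PhiS {a : G} (g : SHoms G a) : Set (R a) := S.Phi g.2

/-- `S` is faithful if only identity morphisms have empty inversion set. -/
def Faithful : Prop :=
  ∀ ⦃a b : G⦄ (f : b ⟶ a), S.Phi f = ∅ → ∃ h : b = a, f = eqToHom h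

/-- `j` is an upper bound of `F` in the weak order at `a`. -/
def IsUB {a : G} (F : Set (SHoms G a)) (j : SHoms G a) : Prop :=
  ∀ g ∈ F, S.PhiS g ⊆ S.PhiS j

/-- `j` is a least upper bound of `F` in the weak order at `a`. -/
def IsLUBw {a : G} (F : Set (SHoms G a)) (j : SHoms G a) : Prop :=
  S.IsUB F j ∧ ∀ k : SHoms G a, S.IsUB F k → S.PhiS j ⊆ S.PhiS k

/-- `S` is complete: the weak order at every object is a complete lattice
(equivalently, every family of morphisms with a common codomain has a join). -/
def Complete : Prop := ∀ (a : G) (F : Set (SHoms G a)), ∃ j : SHoms G a, S.IsLUBw F j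

/-- `S` is finite: finitely many objects, morphisms and roots. -/
def FiniteSGS (_S : SGS G R) : Prop :=
  Finite G ∧ (∀ a b : G, Finite (a ⟶ b)) ∧ ∀ a : G, Finite (R a)

/-- A square `(x, w, y, z)`: a commuting square `xw = yz` with `x(Φ_w) = Φ_y`. -/
def Square {a b c d : G} (x : b ⟶ d) (w : a ⟶ b) (y : c ⟶ d) (z : a ⟶ c) : Prop :=
  w ≫ x = z ≫ y ∧ S.act x '' S.Phi w = S.Phi y

/-- The positive real roots at `a`: the union of all inversion sets at `a`. -/
def posRe (a : G) : Set (R a) := ⋃ g : SHoms G a, S.PhiS g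

/-- An atomic morphism: an atom of the weak order at its codomain. -/
def Atomic {a : G} (g : SHoms G a) : Prop :=
  S.PhiS g ≠ ∅ ∧ ∀ h : SHoms G a, S.PhiS h ⊆ S.PhiS g →
    S.PhiS h = ∅ ∨ S.PhiS h = S.PhiS g

/-- A simple morphism: one whose inversion set is a singleton. -/
def Simple {a b : G} (f : b ⟶ a) : Prop := ∃ α : R a, S.Phi f = {α}

/-- Interval finiteness: every interval `[1ₐ, g]` of a weak order is finite. -/
def IntervalFinite : Prop :=
  ∀ (a : G) (g : SHoms G a), {h : SHoms G a | S.PhiS h ⊆ S.PhiS g}.Finite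

/-- Preprincipal: interval finite, and the inversion set of an atomic morphism is
contained in, or disjoint from, any other inversion set at the same object. -/
def Preprincipal : Prop :=
  S.IntervalFinite ∧ ∀ (a : G) (s g : SHoms G a), S.Atomic s →
    S.PhiS s ⊆ S.PhiS g ∨ S.PhiS s ∩ S.PhiS g = ∅

/-- Antipodal: the weak order at each object has a maximum element. -/
def Antipodal : Prop :=
  ∀ a : G, ∃ ω : SHoms G a, ∀ g : SHoms G a, S.PhiS g ⊆ S.PhiS ω

end SGS

/-!
A maximum `ω : w ⟶ a` of the weak order has `Φ_ω = ₐΦ⁺_re`, so `ω⁻¹` makes every real positive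
root at `a` negative. For `g : a ⟶ b` and `α ∈ ᵦΦ⁺_re`, the root `g⁻¹α` is either positive,
hence real, and then flipped by `ω⁻¹`, or negative with `-g⁻¹α ∈ Φ_{g⁻¹}` real, and then
`ω⁻¹` makes `g⁻¹α` positive again; this gives `Φ_{gω} = ᵦΦ⁺_re \ Φ_g`. Taking `g = ω⁻¹` yields
`Φ_{ω⁻¹} = ʷΦ⁺_re`, so `ω⁻¹` is the maximum at `w` by faithfulness.
-/

@[simp]
theorem CategoryTheory.Groupoid.inv_inv {G : Type u} [Groupoid G] {a b : G} (f : a ⟶ b) :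
    Groupoid.inv (Groupoid.inv f) = f := by
  simp [Groupoid.inv_eq_inv]

namespace SGS

variable {G : Type u} [Groupoid G] {R : G → Type v} (S : SGS G R)

lemma act_inv_comp {a b c : G} (f : c ⟶ b) (g : b ⟶ a) (x : R a) :
    S.act (Groupoid.inv (f ≫ g)) x = S.act (Groupoid.inv f) (S.act (Groupoid.inv g) x) := by
  rw [S.act_comp]
  simp [Groupoid.inv_eq_inv]

lemma act_inv_act {a b : G} (f : b ⟶ a) (x : R b) :
    S.act (Groupoid.inv f) (S.act f x) = x := by
  rw [S.act_comp, Groupoid.comp_inv, S.act_id]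

lemma act_act_inv {a b : G} (f : b ⟶ a) (x : R a) :
    S.act f (S.act (Groupoid.inv f) x) = x := by
  rw [S.act_comp, Groupoid.inv_comp, S.act_id]

lemma neg_mem_pos_iff {a : G} (x : R a) : S.neg x ∈ S.pos a ↔ x ∉ S.pos a := by
  rw [S.pos_iff, S.neg_neg]

@[simp]
lemma Phi_id (a : G) : S.Phi (𝟙 a) = ∅ := by
  ext α
  simp [Phi, Groupoid.inv_eq_inv, S.act_id]

lemma neg_mem_Phi_iff {a b : G} (f : b ⟶ a) {γ : R a} (hγ : γ ∉ S.pos a) :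
    S.neg γ ∈ S.Phi f ↔ S.act (Groupoid.inv f) γ ∈ S.pos b := by
  simp only [Phi, Set.mem_ofPred_eq, S.act_neg, S.neg_mem_pos_iff, not_not]
  exact and_iff_right hγ

lemma Phi_subset_posRe {a b : G} (f : b ⟶ a) : S.Phi f ⊆ S.posRe a :=
  Set.subset_iUnion (fun g : SHoms G a => S.PhiS g) ⟨b, f⟩

lemma act_mem_posRe {a b : G} (g : a ⟶ b) {β : R a} (hβ : β ∈ S.posRe a)
    (hgβ : S.act g β ∈ S.pos b) : S.act g β ∈ S.posRe b := by
  obtain ⟨⟨c, h⟩, hβ⟩ := Set.mem_iUnion.mp hβ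
  refine S.Phi_subset_posRe (h ≫ g) ⟨hgβ, ?_⟩
  rw [S.act_inv_comp, S.act_inv_act]
  exact hβ.2

lemma forall_PhiS_subset_iff {a : G} (ω : SHoms G a) :
    (∀ g : SHoms G a, S.PhiS g ⊆ S.PhiS ω) ↔ S.PhiS ω = S.posRe a :=
  ⟨fun h => (Set.subset_iUnion _ ω).antisymm (Set.iUnion_subset h),
    fun h g => h ▸ Set.subset_iUnion (fun g : SHoms G a => S.PhiS g) g⟩

lemma Phi_comp_inv_eq_empty {a c d : G} {j : c ⟶ a} {k : d ⟶ a} (h : S.Phi j = S.Phi k) :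
    S.Phi (j ≫ Groupoid.inv k) = ∅ := by
  refine Set.eq_empty_of_forall_notMem fun α ⟨hα, hjα⟩ => ?_
  rw [S.act_inv_comp, Groupoid.inv_inv] at hjα
  by_cases hkα : S.act k α ∈ S.pos a
  · have : S.act k α ∈ S.Phi k := h ▸ ⟨hkα, hjα⟩
    exact this.2 (by rwa [S.act_inv_act])
  · have : S.neg (S.act k α) ∈ S.Phi j := by
      rw [h, S.neg_mem_Phi_iff k hkα, S.act_inv_act]
      exact hα
    exact hjα ((S.neg_mem_Phi_iff j hkα).1 this)

lemma Faithful.PhiS_injective {S : SGS G R} (hfa : S.Faithful) (a : G) :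
    Function.Injective (S.PhiS (a := a)) := by
  rintro ⟨c, j⟩ ⟨d, k⟩ (h : S.Phi j = S.Phi k)
  obtain ⟨rfl, he⟩ := hfa _ (S.Phi_comp_inv_eq_empty h)
  rw [eqToHom_refl, ← cancel_mono k, Category.assoc, Groupoid.inv_comp,
    Category.comp_id, Category.id_comp] at he
  rw [he]

lemma Phi_comp_of_Phi_eq_posRe {a b c : G} {f : c ⟶ a} (hf : S.Phi f = S.posRe a)
    (g : a ⟶ b) : S.Phi (f ≫ g) = S.posRe b \ S.Phi g := by
  ext α
  simp only [Phi, Set.mem_ofPred_eq, Set.mem_sdiff, S.act_inv_comp, not_and, not_not]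
  constructor
  · rintro ⟨hα, hfgα⟩
    refine ⟨S.Phi_subset_posRe (f ≫ g) ⟨hα, by rwa [S.act_inv_comp]⟩, fun _ => ?_⟩
    by_contra hgα
    have : S.neg (S.act (Groupoid.inv g) α) ∈ S.Phi (Groupoid.inv g) := by
      rw [S.neg_mem_Phi_iff _ hgα, Groupoid.inv_inv, S.act_act_inv]
      exact hα
    exact hfgα ((S.neg_mem_Phi_iff f hgα).1 (hf ▸ S.Phi_subset_posRe _ this))
  · rintro ⟨hαre, hgα⟩
    obtain ⟨_, hα, -⟩ := Set.mem_iUnion.mp hαre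
    have : S.act (Groupoid.inv g) α ∈ S.Phi f := by
      rw [hf]
      exact S.act_mem_posRe _ hαre (hgα hα)
    exact ⟨hα, this.2⟩

lemma Phi_inv_eq_posRe {a c : G} {f : c ⟶ a} (hf : S.Phi f = S.posRe a) :
    S.Phi (Groupoid.inv f) = S.posRe c := by
  have h := S.Phi_comp_of_Phi_eq_posRe hf (Groupoid.inv f)
  rw [Groupoid.comp_inv, Phi_id, eq_comm, Set.sdiff_eq_empty] at h
  exact (S.Phi_subset_posRe _).antisymm h

end SGS

/-- (a) `ω ∈ ₐG` is a maximum of the weak order at `a` iff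
`Φ_ω` is the set of positive real roots at `a`; (b) if `R` is antipodal with maxima
`ωₐ : wₐ ⟶ a`, then `ω_{wₐ} = ωₐ⁻¹` and `Φ_{g ωₐ} = ᵦΦ⁺_re \ Φ_g` for `g : a ⟶ b`. -/
theorem stmt_12 {G : Type u} [Groupoid G] {R : G → Type v} (S : SGS G R)
    (hfa : S.Faithful) :
    (∀ (a : G) (ω : SHoms G a),
      (∀ g : SHoms G a, S.PhiS g ⊆ S.PhiS ω) ↔ S.PhiS ω = S.posRe a) ∧
    (∀ ω : ∀ a : G, SHoms G a,
      (∀ (a : G) (g : SHoms G a), S.PhiS g ⊆ S.PhiS (ω a)) →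
      (∀ a : G, ω ((ω a).1) = ⟨a, Groupoid.inv (ω a).2⟩) ∧
      (∀ (a b : G) (g : a ⟶ b), S.Phi ((ω a).2 ≫ g) = S.posRe b \ S.Phi g)) := by
  refine ⟨fun a => S.forall_PhiS_subset_iff, fun ω hω => ?_⟩
  have hΦ (a : G) : S.Phi (ω a).2 = S.posRe a := (S.forall_PhiS_subset_iff _).1 (hω a)
  refine ⟨fun a => hfa.PhiS_injective _ ?_, fun a b g => S.Phi_comp_of_Phi_eq_posRe (hΦ a) g⟩
  exact (hΦ _).trans (S.Phi_inv_eq_posRe (hΦ a)).symm
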